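/- Let N and M be quantum channels from M_d(ℂ) to M_{d'}(ℂ) with normalized Choi matrices J^N and J^M, and let ε ≥ 0. If F(J^N, J^M) ≥ 1 − ε, then ½‖N − M‖_⋄ ≤ d√ε. -/

import Mathlib

open scoped BigOperators Kronecker ComplexOrder
open Matrix Filter

noncomputable section

namespace DynEnt

/-- A (not necessarily linear) map between matrix spaces. -/
abbrev MatMap (ι₀ ι₁ : Type) : Type := Matrix ι₀ ι₀ ℂ → Matrix ι₁ ι₁ ℂ

/-- The map `L ⊗ id_ρ`, acting trivially on a reference system indexed by `ρ`. -/
def tensorIdT {ι₀ ι₁ ρ : Type} (L : MatMap ι₀ ι₁)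
    (X : Matrix (ι₀ × ρ) (ι₀ × ρ) ℂ) : Matrix (ι₁ × ρ) (ι₁ × ρ) ℂ :=
  Matrix.of fun p q => L (Matrix.of fun i j => X (i, p.2) (j, q.2)) p.1 q.1

def IsLinearFun {ι₀ ι₁ : Type} (L : MatMap ι₀ ι₁) : Prop :=
  ∀ (c : ℂ) (X Y : Matrix ι₀ ι₀ ℂ), L (c • X + Y) = c • L X + L Y

def IsCompletelyPositive {ι₀ ι₁ : Type} [Fintype ι₀] [Fintype ι₁] (L : MatMap ι₀ ι₁) : Prop :=
  ∀ (r : ℕ) (X : Matrix (ι₀ × Fin r) (ι₀ × Fin r) ℂ), X.PosSemidef → (tensorIdT L X).PosSemidef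

def IsTracePreserving {ι₀ ι₁ : Type} [Fintype ι₀] [Fintype ι₁] (L : MatMap ι₀ ι₁) : Prop :=
  ∀ X, (L X).trace = X.trace

/-- A quantum channel: a linear, completely positive, trace-preserving map. -/
def IsChannel {ι₀ ι₁ : Type} [Fintype ι₀] [Fintype ι₁] (L : MatMap ι₀ ι₁) : Prop :=
  IsLinearFun L ∧ IsCompletelyPositive L ∧ IsTracePreserving L

/-- Tensor product of two matrix maps, defined on matrix units and extended linearly. -/
def tensorMap {α₀ α₁ β₀ β₁ : Type} [Fintype α₀] [DecidableEq α₀] [Fintype β₀] [DecidableEq β₀]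
    (LA : MatMap α₀ α₁) (LB : MatMap β₀ β₁) : MatMap (α₀ × β₀) (α₁ × β₁) :=
  fun X => ∑ i : α₀, ∑ j : α₀, ∑ k : β₀, ∑ l : β₀,
    X (i, k) (j, l) • (LA (Matrix.single i j 1) ⊗ₖ LB (Matrix.single k l 1))

/-- Separable bipartite channel (cut `α : β`). -/
def IsSepChannel {α₀ β₀ α₁ β₁ : Type}
    [Fintype α₀] [DecidableEq α₀] [Fintype β₀] [DecidableEq β₀] [Fintype α₁] [Fintype β₁]
    (N : MatMap (α₀ × β₀) (α₁ × β₁)) : Prop :=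
  IsChannel N ∧ ∃ (n : ℕ) (LA : Fin n → MatMap α₀ α₁) (LB : Fin n → MatMap β₀ β₁),
    (∀ k, IsLinearFun (LA k) ∧ IsCompletelyPositive (LA k) ∧
          IsLinearFun (LB k) ∧ IsCompletelyPositive (LB k)) ∧
    ∀ X, N X = ∑ k, tensorMap (LA k) (LB k) X

/-- The square root of a positive semidefinite matrix, as `Matrix.PosSemidef.sqrt` was defined
in the older Mathlib (that declaration is gone). -/
def posSemidefSqrt {ι : Type} [Fintype ι] [DecidableEq ι] {A : Matrix ι ι ℂ}
    (hA : A.PosSemidef) : Matrix ι ι ℂ :=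
  (hA.1.eigenvectorUnitary : Matrix ι ι ℂ) *
    Matrix.diagonal ((↑) ∘ (Real.sqrt ·) ∘ hA.1.eigenvalues) *
    (star hA.1.eigenvectorUnitary : Matrix ι ι ℂ)

/-- Trace norm `‖X‖₁ = tr √(X† X)`. -/
def traceNorm {ι : Type} [Fintype ι] [DecidableEq ι] (X : Matrix ι ι ℂ) : ℝ :=
  (posSemidefSqrt (Matrix.posSemidef_conjTranspose_mul_self X)).trace.re

/-- Density matrix. -/
def IsState {ι : Type} [Fintype ι] (ρ : Matrix ι ι ℂ) : Prop :=
  ρ.PosSemidef ∧ ρ.trace = 1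

/-- Pure state (rank-one density matrix). -/
def IsPureState {ι : Type} [Fintype ι] (ρ : Matrix ι ι ℂ) : Prop :=
  ∃ v : ι → ℂ, (∑ i, Complex.normSq (v i)) = 1 ∧
    ρ = Matrix.vecMulVec v (fun i => star (v i))

/-- Diamond norm. -/
def diamondNorm {ι₀ ι₁ : Type} [Fintype ι₀] [Fintype ι₁] [DecidableEq ι₁]
    (L : MatMap ι₀ ι₁) : ℝ :=
  sSup { t : ℝ | ∃ (r : ℕ) (ρ : Matrix (ι₀ × Fin r) (ι₀ × Fin r) ℂ),
    ρ.PosSemidef ∧ ρ.trace = 1 ∧ t = traceNorm (tensorIdT L ρ) }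

section Bipartite

variable {α₀ β₀ α₁ β₁ α₀' β₀' α₁' β₁' : Type}
variable [Fintype α₀] [DecidableEq α₀] [Fintype β₀] [DecidableEq β₀]
variable [Fintype α₁] [DecidableEq α₁] [Fintype β₁] [DecidableEq β₁]
variable [Fintype α₀'] [DecidableEq α₀'] [Fintype β₀'] [DecidableEq β₀']
variable [Fintype α₁'] [DecidableEq α₁'] [Fintype β₁'] [DecidableEq β₁']

/-- Standard robustness w.r.t. separable channels. -/
def stdRobustness (N : MatMap (α₀ × β₀) (α₁ × β₁)) : ℝ :=
  sInf { s : ℝ | 0 ≤ s ∧ ∃ M : MatMap (α₀ × β₀) (α₁ × β₁), IsSepChannel M ∧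
    IsSepChannel (fun X => (1 + s)⁻¹ • (N X + s • M X)) }

/-- Generalized robustness w.r.t. separable channels. -/
def genRobustness (N : MatMap (α₀ × β₀) (α₁ × β₁)) : ℝ :=
  sInf { s : ℝ | 0 ≤ s ∧ ∃ M : MatMap (α₀ × β₀) (α₁ × β₁), IsChannel M ∧
    IsSepChannel (fun X => (1 + s)⁻¹ • (N X + s • M X)) }

/-- Standard log-robustness. -/
def LRs (N : MatMap (α₀ × β₀) (α₁ × β₁)) : ℝ := Real.logb 2 (1 + stdRobustness N)

/-- Generalized log-robustness. -/
def LRgen (N : MatMap (α₀ × β₀) (α₁ × β₁)) : ℝ := Real.logb 2 (1 + genRobustness N)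

/-- Smooth standard log-robustness. -/
def smoothLRs (ε : ℝ) (N : MatMap (α₀ × β₀) (α₁ × β₁)) : ℝ :=
  sInf { t : ℝ | ∃ N' : MatMap (α₀ × β₀) (α₁ × β₁), IsChannel N' ∧
    (1/2) * diamondNorm (fun X => N' X - N X) ≤ ε ∧ t = LRs N' }

/-- Smooth generalized log-robustness. -/
def smoothLRgen (ε : ℝ) (N : MatMap (α₀ × β₀) (α₁ × β₁)) : ℝ :=
  sInf { t : ℝ | ∃ N' : MatMap (α₀ × β₀) (α₁ × β₁), IsChannel N' ∧
    (1/2) * diamondNorm (fun X => N' X - N X) ≤ ε ∧ t = LRgen N' }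

end Bipartite

/-- A superchannel, given by pre- and post-processing channels with a memory system `Fin e`. -/
structure Superchannel (α₀ β₀ α₁ β₁ α₀' β₀' α₁' β₁' : Type)
    [Fintype α₀] [Fintype β₀] [Fintype α₁] [Fintype β₁]
    [Fintype α₀'] [Fintype β₀'] [Fintype α₁'] [Fintype β₁'] : Type where
  e : ℕ
  pre : MatMap (α₀' × β₀') ((α₀ × β₀) × Fin e)
  post : MatMap ((α₁ × β₁) × Fin e) (α₁' × β₁')
  pre_channel : IsChannel pre
  post_channel : IsChannel post

section Super

variable {α₀ β₀ α₁ β₁ α₀' β₀' α₁' β₁' : Type}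
variable [Fintype α₀] [DecidableEq α₀] [Fintype β₀] [DecidableEq β₀]
variable [Fintype α₁] [DecidableEq α₁] [Fintype β₁] [DecidableEq β₁]
variable [Fintype α₀'] [DecidableEq α₀'] [Fintype β₀'] [DecidableEq β₀']
variable [Fintype α₁'] [DecidableEq α₁'] [Fintype β₁'] [DecidableEq β₁']

/-- Action of a superchannel on a channel: `Θ[E] = post ∘ (E ⊗ id) ∘ pre`. -/
def Superchannel.apply (Θ : Superchannel α₀ β₀ α₁ β₁ α₀' β₀' α₁' β₁')
    (E : MatMap (α₀ × β₀) (α₁ × β₁)) : MatMap (α₀' × β₀') (α₁' × β₁') :=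
  fun X => Θ.post (tensorIdT E (Θ.pre X))

/-- Separability-preserving superchannel. -/
def IsSEPPSC (Θ : Superchannel α₀ β₀ α₁ β₁ α₀' β₀' α₁' β₁') : Prop :=
  ∀ M : MatMap (α₀ × β₀) (α₁ × β₁), IsSepChannel M → IsSepChannel (Θ.apply M)

/-- δ-separability-preserving superchannel. -/
def IsDeltaSEPPSC (δ : ℝ) (Θ : Superchannel α₀ β₀ α₁ β₁ α₀' β₀' α₁' β₁') : Prop :=
  ∀ M : MatMap (α₀ × β₀) (α₁ × β₁), IsSepChannel M → genRobustness (Θ.apply M) ≤ δ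

end Super

/-- The swap unitary `F = Σ |ij⟩⟨ji|` on `ℂ^K ⊗ ℂ^K`. -/
def swapMatrix (K : ℕ) : Matrix (Fin K × Fin K) (Fin K × Fin K) ℂ :=
  Matrix.of fun p q => if p.1 = q.2 ∧ p.2 = q.1 then 1 else 0

/-- The `K`-swap channel `X ↦ F X F†`. -/
def swapChannel (K : ℕ) : MatMap (Fin K × Fin K) (Fin K × Fin K) :=
  fun X => swapMatrix K * X * (swapMatrix K)ᴴ

/-- The density matrix of the `K`-maximally entangled state inside `ℂ^{dA} ⊗ ℂ^{dB}`. -/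
def maxEntangled (dA dB K : ℕ) : Matrix (Fin dA × Fin dB) (Fin dA × Fin dB) ℂ :=
  Matrix.of fun p q =>
    if (p.1 : ℕ) = (p.2 : ℕ) ∧ (q.1 : ℕ) = (q.2 : ℕ) ∧ (p.1 : ℕ) < K ∧ (q.1 : ℕ) < K
    then (1 / K : ℂ) else 0

/-- Separable bipartite state. -/
def IsSepState {ιA ιB : Type} [Fintype ιA] [Fintype ιB]
    (σ : Matrix (ιA × ιB) (ιA × ιB) ℂ) : Prop :=
  ∃ (n : ℕ) (p : Fin n → ℝ) (φ : Fin n → ιA → ℂ) (ψ : Fin n → ιB → ℂ),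
    (∀ a, 0 ≤ p a) ∧ (∑ a, p a) = 1 ∧
    (∀ a, (∑ i, Complex.normSq (φ a i)) = 1) ∧
    (∀ a, (∑ i, Complex.normSq (ψ a i)) = 1) ∧
    σ = ∑ a, (p a : ℂ) •
      (Matrix.vecMulVec (φ a) (fun i => star (φ a i)) ⊗ₖ
       Matrix.vecMulVec (ψ a) (fun i => star (ψ a i)))

/-- Input state `Φ^{a₀}_{A₀Ã₀} ⊗ Φ^{b₀}_{B₀B̃₀}` for the Choi matrix, with index
grouping `(A₀ × B₀) × (Ã₀ × B̃₀)`. -/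
def choiInput (a₀ b₀ : ℕ) :
    Matrix ((Fin a₀ × Fin b₀) × (Fin a₀ × Fin b₀)) ((Fin a₀ × Fin b₀) × (Fin a₀ × Fin b₀)) ℂ :=
  Matrix.of fun p q =>
    maxEntangled a₀ a₀ a₀ (p.1.1, p.2.1) (q.1.1, q.2.1) *
    maxEntangled b₀ b₀ b₀ (p.1.2, p.2.2) (q.1.2, q.2.2)

/-- Normalized Choi matrix of a bipartite channel. -/
def choiBi {a₀ b₀ : ℕ} {ι₁ : Type} (E : MatMap (Fin a₀ × Fin b₀) ι₁) :
    Matrix (ι₁ × (Fin a₀ × Fin b₀)) (ι₁ × (Fin a₀ × Fin b₀)) ℂ :=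
  tensorIdT E (choiInput a₀ b₀)

/-- Normalized Choi matrix of a single-system channel. -/
def choi1 {d : ℕ} {ι₁ : Type} (N : MatMap (Fin d) ι₁) :
    Matrix (ι₁ × Fin d) (ι₁ × Fin d) ℂ :=
  tensorIdT N (maxEntangled d d d)

open Classical in
/-- Square root of a matrix (positive semidefinite case, junk value `0` otherwise). -/
def matSqrt {ι : Type} [Fintype ι] [DecidableEq ι] (A : Matrix ι ι ℂ) : Matrix ι ι ℂ :=
  if h : A.PosSemidef then posSemidefSqrt h else 0

/-- Fidelity `F(ρ,σ) = (tr √(√ρ σ √ρ))²`. -/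
def fidelity {ι : Type} [Fintype ι] [DecidableEq ι] (ρ σ : Matrix ι ι ℂ) : ℝ :=
  ((matSqrt (matSqrt ρ * σ * matSqrt ρ)).trace.re) ^ 2

section OpTasks

variable {α₀ β₀ α₁ β₁ α₀' β₀' α₁' β₁' : Type}
variable [Fintype α₀] [DecidableEq α₀] [Fintype β₀] [DecidableEq β₀]
variable [Fintype α₁] [DecidableEq α₁] [Fintype β₁] [DecidableEq β₁]
variable [Fintype α₀'] [DecidableEq α₀'] [Fintype β₀'] [DecidableEq β₀']
variable [Fintype α₁'] [DecidableEq α₁'] [Fintype β₁'] [DecidableEq β₁']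

/-- One-shot dynamic entanglement cost under SEPPSC. -/
def oneShotCostSEPP (ε : ℝ) (N : MatMap (α₀ × β₀) (α₁ × β₁)) : ℝ :=
  sInf { t : ℝ | ∃ (K : ℕ) (Θ : Superchannel (Fin K) (Fin K) (Fin K) (Fin K) α₀ β₀ α₁ β₁),
    IsSEPPSC Θ ∧
    (1/2) * diamondNorm (fun X => Θ.apply (swapChannel K) X - N X) ≤ ε ∧
    t = Real.logb 2 ((K : ℝ) ^ 2) }

/-- One-shot distillable dynamic entanglement under SEPPSC. -/
def oneShotDistillSEPP (ε : ℝ) (N : MatMap (α₀ × β₀) (α₁ × β₁)) : ℝ :=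
  sSup { t : ℝ | ∃ (K : ℕ) (Θ : Superchannel α₀ β₀ α₁ β₁ (Fin K) (Fin K) (Fin K) (Fin K)),
    IsSEPPSC Θ ∧
    (1/2) * diamondNorm (fun X => Θ.apply N X - swapChannel K X) ≤ ε ∧
    t = Real.logb 2 ((K : ℝ) ^ 2) }

/-- Hypothesis-testing relative entropy of dynamic entanglement. -/
def EH (ε : ℝ) (N : MatMap (α₀ × β₀) (α₁ × β₁)) : ℝ :=
  sSup { t : ℝ | ∃ (r : ℕ) (Ψ : Matrix ((α₀ × β₀) × Fin r) ((α₀ × β₀) × Fin r) ℂ)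
      (Q : Matrix ((α₁ × β₁) × Fin r) ((α₁ × β₁) × Fin r) ℂ),
    IsPureState Ψ ∧ Q.PosSemidef ∧ ((1 : Matrix ((α₁ × β₁) × Fin r) ((α₁ × β₁) × Fin r) ℂ) - Q).PosSemidef ∧
    1 - ε ≤ ((tensorIdT N Ψ * Q).trace).re ∧
    t = sInf { u : ℝ | ∃ M : MatMap (α₀ × β₀) (α₁ × β₁), IsSepChannel M ∧
        u = - Real.logb 2 (((tensorIdT M Ψ * Q).trace).re) } }

end OpTasks

/-- Reindexing a matrix map along equivalences of index types. -/
def reindexMap {ι₀ ι₁ κ₀ κ₁ : Type} (e₀ : ι₀ ≃ κ₀) (e₁ : ι₁ ≃ κ₁) (L : MatMap ι₀ ι₁) :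
    MatMap κ₀ κ₁ :=
  fun X => Matrix.reindex e₁ e₁ (L (Matrix.reindex e₀.symm e₀.symm X))

section Cat

variable {α₀ β₀ α₁ β₁ : Type}
variable [Fintype α₀] [DecidableEq α₀] [Fintype β₀] [DecidableEq β₀]
variable [Fintype α₁] [DecidableEq α₁] [Fintype β₁] [DecidableEq β₁]

/-- `N ⊗ F^L` as a bipartite channel for the cut `A C : B D` (catalyst `CD` of dimension `L×L`). -/
def tensorSwapCut (N : MatMap (α₀ × β₀) (α₁ × β₁)) (L : ℕ) :
    MatMap ((α₀ × Fin L) × (β₀ × Fin L)) ((α₁ × Fin L) × (β₁ × Fin L)) :=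
  reindexMap (Equiv.prodProdProdComm α₀ β₀ (Fin L) (Fin L))
             (Equiv.prodProdProdComm α₁ β₁ (Fin L) (Fin L))
             (tensorMap N (swapChannel L))

/-- One-shot catalytic dynamic entanglement cost under δ-SEPPSC. -/
def catalyticCost (δ ε : ℝ) (N : MatMap (α₀ × β₀) (α₁ × β₁)) : ℝ :=
  sInf { t : ℝ | ∃ (K L : ℕ)
      (Θ : Superchannel (Fin K × Fin L) (Fin K × Fin L) (Fin K × Fin L) (Fin K × Fin L)
            (α₀ × Fin L) (β₀ × Fin L) (α₁ × Fin L) (β₁ × Fin L)),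
    IsDeltaSEPPSC δ Θ ∧
    ∃ N' : MatMap (α₀ × β₀) (α₁ × β₁), IsChannel N' ∧
      (1/2) * diamondNorm (fun X => N' X - N X) ≤ ε ∧
      Θ.apply (tensorSwapCut (swapChannel K) L) = tensorSwapCut N' L ∧
      t = Real.logb 2 ((K : ℝ) ^ 2) }

end Cat

/-- Discrete Weyl operators on `ℂ^K`. -/
def weyl (K : ℕ) (k l : Fin K) : Matrix (Fin K) (Fin K) ℂ :=
  Matrix.of fun a s =>
    if (a : ℕ) = ((k : ℕ) + (s : ℕ)) % K
    then Complex.exp (2 * (Real.pi : ℂ) * Complex.I * ((s : ℕ) : ℂ) * ((l : ℕ) : ℂ) / (K : ℂ))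
    else 0

/-- `n`-fold tensor power of a matrix. -/
def matPow {ι : Type} [Fintype ι] (X : Matrix ι ι ℂ) (n : ℕ) :
    Matrix (Fin n → ι) (Fin n → ι) ℂ :=
  Matrix.of fun f g => ∏ t, X (f t) (g t)

/-- `n`-fold tensor power of a matrix map. -/
def powMap {ι₀ ι₁ : Type} [Fintype ι₀] [DecidableEq ι₀] (L : MatMap ι₀ ι₁) (n : ℕ) :
    MatMap (Fin n → ι₀) (Fin n → ι₁) :=
  fun X => Matrix.of fun f' g' => ∑ f : Fin n → ι₀, ∑ g : Fin n → ι₀,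
    X f g * ∏ t, L (Matrix.single (f t) (g t) 1) (f' t) (g' t)

section Pow

variable {α₀ β₀ α₁ β₁ : Type}
variable [Fintype α₀] [DecidableEq α₀] [Fintype β₀] [DecidableEq β₀]
variable [Fintype α₁] [DecidableEq α₁] [Fintype β₁] [DecidableEq β₁]

/-- `n`-fold tensor power of a bipartite channel, with cut `A^n : B^n`. -/
def powBi (N : MatMap (α₀ × β₀) (α₁ × β₁)) (n : ℕ) :
    MatMap ((Fin n → α₀) × (Fin n → β₀)) ((Fin n → α₁) × (Fin n → β₁)) :=
  reindexMap (Equiv.arrowProdEquivProdArrow (Fin n) (fun _ => α₀) (fun _ => β₀))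
             (Equiv.arrowProdEquivProdArrow (Fin n) (fun _ => α₁) (fun _ => β₁))
             (powMap N n)

/-- `φ^{⊗n}` of a bipartite input-reference state, regrouped as
`((A₀ⁿ × B₀ⁿ) × refⁿ)`. -/
def phiPow (n : ℕ)
    (φ : Matrix ((α₀ × β₀) × (α₀ × β₀)) ((α₀ × β₀) × (α₀ × β₀)) ℂ) :
    Matrix (((Fin n → α₀) × (Fin n → β₀)) × (Fin n → (α₀ × β₀)))
           (((Fin n → α₀) × (Fin n → β₀)) × (Fin n → (α₀ × β₀))) ℂ :=
  Matrix.reindex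
    ((Equiv.arrowProdEquivProdArrow (Fin n) (fun _ => α₀ × β₀) (fun _ => α₀ × β₀)).trans
      (Equiv.prodCongr (Equiv.arrowProdEquivProdArrow (Fin n) (fun _ => α₀) (fun _ => β₀)) (Equiv.refl _)))
    ((Equiv.arrowProdEquivProdArrow (Fin n) (fun _ => α₀ × β₀) (fun _ => α₀ × β₀)).trans
      (Equiv.prodCongr (Equiv.arrowProdEquivProdArrow (Fin n) (fun _ => α₀) (fun _ => β₀)) (Equiv.refl _)))
    (matPow φ n)

end Pow

open Classical in
/-- Base-2 matrix logarithm via the spectral decomposition (junk value `0` if not Hermitian). -/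
def matLogb2 {ι : Type} [Fintype ι] [DecidableEq ι] (A : Matrix ι ι ℂ) : Matrix ι ι ℂ :=
  if h : A.IsHermitian then
    (h.eigenvectorUnitary : Matrix ι ι ℂ) *
      Matrix.diagonal (fun i => ((Real.logb 2 (h.eigenvalues i) : ℝ) : ℂ)) *
      (star h.eigenvectorUnitary : Matrix ι ι ℂ)
  else 0

/-- Umegaki relative entropy `D(ρ‖σ) = tr ρ (log₂ ρ − log₂ σ)`. -/
def relEnt {ι : Type} [Fintype ι] [DecidableEq ι] (ρ σ : Matrix ι ι ℂ) : ℝ :=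
  ((ρ * (matLogb2 ρ - matLogb2 σ)).trace).re

section Liberal

variable {α₀ β₀ α₁ β₁ : Type}
variable [Fintype α₀] [DecidableEq α₀] [Fintype β₀] [DecidableEq β₀]
variable [Fintype α₁] [DecidableEq α₁] [Fintype β₁] [DecidableEq β₁]

/-- Zero-error one-shot dynamic entanglement cost under SEPPSC. -/
def zeroCostSEPP (N : MatMap (α₀ × β₀) (α₁ × β₁)) : ℝ :=
  sInf { t : ℝ | ∃ (K : ℕ) (Θ : Superchannel (Fin K) (Fin K) (Fin K) (Fin K) α₀ β₀ α₁ β₁),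
    IsSEPPSC Θ ∧ Θ.apply (swapChannel K) = N ∧ t = Real.logb 2 ((K : ℝ) ^ 2) }

/-- Liberal (asymptotic) dynamic entanglement cost under SEPPSC. -/
def liberalCost (N : MatMap (α₀ × β₀) (α₁ × β₁)) : ℝ :=
  limUnder (nhdsWithin (0 : ℝ) (Set.Ioi 0)) (fun ε : ℝ =>
    liminf (fun n : ℕ =>
      (1 / (n : ℝ)) * sSup { t : ℝ |
        ∃ φ : Matrix ((α₀ × β₀) × (α₀ × β₀)) ((α₀ × β₀) × (α₀ × β₀)) ℂ, IsState φ ∧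
          t = sInf { u : ℝ |
            ∃ N'' : MatMap ((Fin n → α₀) × (Fin n → β₀)) ((Fin n → α₁) × (Fin n → β₁)),
              IsChannel N'' ∧
              (1/2) * traceNorm
                (tensorIdT N'' (phiPow n φ) - tensorIdT (powBi N n) (phiPow n φ)) ≤ ε ∧
              u = zeroCostSEPP N'' } }) atTop)

/-- Liberal regularized relative entropy with respect to separable channels. -/
def liberalRelEnt (N : MatMap (α₀ × β₀) (α₁ × β₁)) : ℝ :=
  limUnder atTop (fun n : ℕ =>
    (1 / (n : ℝ)) * sSup { t : ℝ |
      ∃ φ : Matrix ((α₀ × β₀) × (α₀ × β₀)) ((α₀ × β₀) × (α₀ × β₀)) ℂ, IsState φ ∧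
        t = sInf { u : ℝ | ∃ M : MatMap (α₀ × β₀) (α₁ × β₁), IsSepChannel M ∧
          u = relEnt (tensorIdT (powBi N n) (phiPow n φ))
                     (tensorIdT (powBi M n) (phiPow n φ)) } })

end Liberal

/-!
For `Λ = N - M` with normalized Choi matrix `J = J^N - J^M`, every input of `Λ ⊗ id` is a sum of
rank-one terms `g g†`, and each `g` is `(1 ⊗ G)` applied to `√d` times the maximally entangled
vector, where `‖G‖ ≤ ‖g‖`; hence `‖(Λ ⊗ id) ρ‖₁ ≤ d ‖J‖₁` for every state `ρ`. The
Fuchs–van de Graaf inequality `‖ρ - σ‖₁ ≤ 2 √(1 - F(ρ, σ))` bounds `‖J‖₁` by `2 √ε`.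
The trace-norm inequalities used along the way all follow from the polar decomposition and
Hölder's inequality `|tr (X C)| ≤ ‖C‖ ‖X‖₁`.
-/

section PosSemidefSqrt

open scoped MatrixOrder

variable {ι : Type} [Fintype ι] [DecidableEq ι]

theorem posSemidefSqrt_eq_cfcSqrt {A : Matrix ι ι ℂ} (hA : A.PosSemidef) :
    posSemidefSqrt hA = CFC.sqrt A := by
  rw [CFC.sqrt_eq_real_sqrt A hA.nonneg, cfcₙ_eq_cfc, hA.1.cfc_eq]
  simp [IsHermitian.cfc, posSemidefSqrt, Function.comp_def, Unitary.conjStarAlgAut_apply]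

theorem posSemidef_posSemidefSqrt {A : Matrix ι ι ℂ} (hA : A.PosSemidef) :
    (posSemidefSqrt hA).PosSemidef := by
  rw [posSemidefSqrt_eq_cfcSqrt]
  exact (CFC.sqrt_nonneg A).posSemidef

theorem posSemidefSqrt_mul_self {A : Matrix ι ι ℂ} (hA : A.PosSemidef) :
    posSemidefSqrt hA * posSemidefSqrt hA = A := by
  rw [posSemidefSqrt_eq_cfcSqrt]
  exact CFC.sqrt_mul_sqrt_self A hA.nonneg

theorem eq_posSemidefSqrt_of_mul_self_eq {A S : Matrix ι ι ℂ} (hA : A.PosSemidef)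
    (hS : S.PosSemidef) (h : S * S = A) : S = posSemidefSqrt hA := by
  rw [posSemidefSqrt_eq_cfcSqrt, eq_comm, CFC.sqrt_eq_iff A S hA.nonneg hS.nonneg, h]

end PosSemidefSqrt

section PolarDecomposition

variable {ι : Type} [Fintype ι] [DecidableEq ι]

/-- Columns of `B` are orthogonal with squared lengths `μ i`, so on the support of `μ` they
normalise to an orthonormal family, which extends to an orthonormal basis. -/
theorem exists_mem_unitaryGroup_eq_mul_diagonal_sqrt {B : Matrix ι ι ℂ} {μ : ι → ℝ}
    (hμ : ∀ i, 0 ≤ μ i) (hB : Bᴴ * B = diagonal fun i => (μ i : ℂ)) :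
    ∃ Y ∈ unitaryGroup ι ℂ, B = Y * diagonal fun i => (√(μ i) : ℂ) := by
  set col : ι → EuclideanSpace ℂ ι := fun i => WithLp.toLp 2 fun k => B k i
  have hcol : ∀ i j, inner ℂ (col i) (col j) = if i = j then (μ i : ℂ) else 0 := by
    intro i j
    have := congrFun (congrFun hB i) j
    simp only [mul_apply, conjTranspose_apply, diagonal_apply] at this
    rw [← this, EuclideanSpace.inner_toLp_toLp, dotProduct]
    exact Finset.sum_congr rfl fun k _ => mul_comm _ _
  have hsqrt : ∀ i, μ i ≠ 0 → (√(μ i) : ℂ) ≠ 0 := fun i hi => by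
    exact_mod_cast (Real.sqrt_pos.2 (lt_of_le_of_ne (hμ i) (Ne.symm hi))).ne'
  set e : ι → EuclideanSpace ℂ ι := fun i => ((√(μ i) : ℂ))⁻¹ • col i
  have he : Orthonormal ℂ (Set.domRestrict {i | μ i ≠ 0} e) := by
    rw [orthonormal_iff_ite]
    rintro ⟨i, hi⟩ ⟨j, hj⟩
    simp only [Set.domRestrict_apply, e, inner_smul_left, inner_smul_right, hcol, Subtype.mk.injEq]
    split_ifs with hij
    · subst hij
      have := hsqrt i hi
      have hμi : (μ i : ℂ) = √(μ i) * √(μ i) := by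
        exact_mod_cast (Real.mul_self_sqrt (hμ i)).symm
      rw [map_inv₀, Complex.conj_ofReal, hμi]
      field_simp
    · simp
  obtain ⟨b, hb⟩ := he.exists_orthonormalBasis_extension_of_card_eq (by simp)
  refine ⟨(EuclideanSpace.basisFun ι ℂ).toBasis.toMatrix b,
    (EuclideanSpace.basisFun ι ℂ).toMatrix_orthonormalBasis_mem_unitary b, ?_⟩
  ext k i
  rw [mul_diagonal, Module.Basis.toMatrix_apply]
  by_cases hi : μ i = 0
  · have : col i = 0 := by
      rw [← inner_self_eq_zero (𝕜 := ℂ), hcol, if_pos rfl, hi, Complex.ofReal_zero]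
    simpa [hi] using congrArg (fun v : EuclideanSpace ℂ ι => v k) this
  · have := hsqrt i hi
    rw [hb i hi]
    simp [e, col]
    field_simp

theorem exists_mem_unitaryGroup_eq_mul_posSemidefSqrt (X : Matrix ι ι ℂ) :
    ∃ U ∈ unitaryGroup ι ℂ, X = U * posSemidefSqrt (posSemidef_conjTranspose_mul_self X) := by
  set h := (posSemidef_conjTranspose_mul_self X).1
  set V : Matrix ι ι ℂ := (h.eigenvectorUnitary : Matrix ι ι ℂ)
  have hVV : star V * V = 1 := Unitary.star_mul_self_of_mem h.eigenvectorUnitary.2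
  have hVV' : V * star V = 1 := Unitary.mul_star_self_of_mem h.eigenvectorUnitary.2
  set D := diagonal fun i => (h.eigenvalues i : ℂ)
  have hspec : Xᴴ * X = V * D * star V := by
    conv_lhs => rw [h.spectral_theorem, Unitary.conjStarAlgAut_apply]
    rfl
  have hXV : (X * V)ᴴ * (X * V) = D := by
    rw [conjTranspose_mul, ← star_eq_conjTranspose, Matrix.mul_assoc, ← Matrix.mul_assoc Xᴴ,
      hspec]
    simp only [Matrix.mul_assoc, hVV, Matrix.mul_one]
    rw [← Matrix.mul_assoc, hVV, Matrix.one_mul]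
  obtain ⟨Y, hY, hXV⟩ := exists_mem_unitaryGroup_eq_mul_diagonal_sqrt
    (posSemidef_conjTranspose_mul_self X).eigenvalues_nonneg hXV
  refine ⟨Y * star V, Submonoid.mul_mem _ hY (Unitary.star_mem h.eigenvectorUnitary.2), ?_⟩
  calc X = X * V * star V := by rw [Matrix.mul_assoc, hVV', Matrix.mul_one]
    _ = Y * star V * (V * diagonal (fun i => (√(h.eigenvalues i) : ℂ)) * star V) := by
      rw [hXV]
      simp only [Matrix.mul_assoc, ← Matrix.mul_assoc (star V) V, hVV, Matrix.one_mul]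

end PolarDecomposition

section L2OpNorm

open scoped Matrix.Norms.L2Operator
open WithLp (toLp)

variable {m n p : Type} [Fintype m] [Fintype n] [Fintype p]

theorem norm_toLp_mulVec_le [DecidableEq n] (A : Matrix m n ℂ) (v : n → ℂ) :
    ‖toLp 2 (A *ᵥ v)‖ ≤ ‖A‖ * ‖toLp 2 v‖ := by
  simpa using A.l2_opNorm_mulVec (toLp 2 v)

theorem l2_opNorm_le_of_forall_norm_mulVec_le [DecidableEq n] {A : Matrix m n ℂ} {c : ℝ}
    (hc : 0 ≤ c) (h : ∀ v, ‖toLp 2 (A *ᵥ v)‖ ≤ c * ‖toLp 2 v‖) : ‖A‖ ≤ c := by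
  rw [l2_opNorm_def]
  exact ContinuousLinearMap.opNorm_le_bound _ hc fun x => h x.ofLp

theorem l2_opNorm_le_one_of_mem_unitaryGroup [DecidableEq m] {U : Matrix m m ℂ}
    (hU : U ∈ unitaryGroup m ℂ) : ‖U‖ ≤ 1 := by
  rcases subsingleton_or_nontrivial (Matrix m m ℂ) with h | h
  · simp [Subsingleton.elim U 0]
  · exact (CStarRing.norm_of_mem_unitary hU).le

theorem norm_toLp_vec_sq (Y : Matrix m n ℂ) :
    ‖toLp 2 (vec Y)‖ ^ 2 = ∑ j, ‖toLp 2 fun i => Y i j‖ ^ 2 := by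
  simp [EuclideanSpace.norm_sq_eq, Fintype.sum_prod_type]

theorem norm_toLp_vec_mul_le [DecidableEq n] (M : Matrix m n ℂ) (R : Matrix n p ℂ) :
    ‖toLp 2 (vec (M * R))‖ ≤ ‖M‖ * ‖toLp 2 (vec R)‖ := by
  refine le_of_pow_le_pow_left₀ two_ne_zero (by positivity) ?_
  rw [mul_pow, norm_toLp_vec_sq, norm_toLp_vec_sq, Finset.mul_sum]
  refine Finset.sum_le_sum fun j _ => ?_
  rw [← mul_pow]
  gcongr
  exact norm_toLp_mulVec_le M fun k => R k j

theorem l2_opNorm_le_norm_toLp_vec [DecidableEq n] (G : Matrix m n ℂ) : ‖G‖ ≤ ‖toLp 2 (vec G)‖ := by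
  refine l2_opNorm_le_of_forall_norm_mulVec_le (norm_nonneg _) fun v => ?_
  refine le_of_pow_le_pow_left₀ two_ne_zero (by positivity) ?_
  have hrows : ‖toLp 2 (vec G)‖ ^ 2 = ∑ i, ‖toLp 2 (G i)‖ ^ 2 := by
    simp only [EuclideanSpace.norm_sq_eq, Fintype.sum_prod_type]
    exact Finset.sum_comm
  rw [mul_pow, hrows, Finset.sum_mul, EuclideanSpace.norm_sq_eq]
  refine Finset.sum_le_sum fun i _ => ?_
  rw [← mul_pow]
  gcongr
  have h := norm_inner_le_norm (𝕜 := ℂ) (toLp 2 (star (G i))) (toLp 2 v)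
  rw [EuclideanSpace.inner_toLp_toLp, star_star, dotProduct_comm] at h
  simpa [EuclideanSpace.norm_eq, mulVec] using h

theorem l2_opNorm_one_kronecker_le [DecidableEq n] [DecidableEq p] (G : Matrix m n ℂ) :
    ‖(1 : Matrix p p ℂ) ⊗ₖ G‖ ≤ ‖G‖ := by
  refine l2_opNorm_le_of_forall_norm_mulVec_le (norm_nonneg _) fun v => ?_
  have := norm_toLp_vec_mul_le G (Matrix.of fun j a => v (a, j))
  rwa [← Matrix.mul_one (G * _), ← transpose_one, ← kronecker_mulVec_vec] at this

end L2OpNorm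

theorem _root_.Matrix.PosSemidef.ofReal_re_trace {ι : Type} [Fintype ι] {A : Matrix ι ι ℂ}
    (hA : A.PosSemidef) : (A.trace.re : ℂ) = A.trace :=
  Complex.ext rfl (by simp [← (Complex.nonneg_iff.1 hA.trace_nonneg).2])

theorem re_star_dotProduct_self {n : Type} [Fintype n] (v : n → ℂ) :
    (star v ⬝ᵥ v).re = ‖WithLp.toLp 2 v‖ ^ 2 := by
  simp [dotProduct, EuclideanSpace.norm_sq_eq, Complex.sq_norm, Complex.normSq_apply]

section TraceNorm

open scoped Matrix.Norms.L2Operator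

variable {ι : Type} [Fintype ι] [DecidableEq ι]

theorem traceNorm_eq_re_trace_of_mul_self_eq {X S : Matrix ι ι ℂ} (hS : S.PosSemidef)
    (h : S * S = Xᴴ * X) : traceNorm X = S.trace.re := by
  rw [traceNorm, ← eq_posSemidefSqrt_of_mul_self_eq _ hS h]

theorem traceNorm_zero : traceNorm (0 : Matrix ι ι ℂ) = 0 := by
  simp [traceNorm_eq_re_trace_of_mul_self_eq PosSemidef.zero (X := 0) (by simp)]

theorem traceNorm_nonneg (X : Matrix ι ι ℂ) : 0 ≤ traceNorm X :=
  (Complex.nonneg_iff.1 (posSemidef_posSemidefSqrt _).trace_nonneg).1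

theorem exists_mem_unitaryGroup_trace_mul_eq_traceNorm (X : Matrix ι ι ℂ) :
    ∃ U ∈ unitaryGroup ι ℂ, (X * U).trace = traceNorm X := by
  obtain ⟨U, hU, hX⟩ := exists_mem_unitaryGroup_eq_mul_posSemidefSqrt X
  refine ⟨star U, Unitary.star_mem hU, ?_⟩
  calc (X * star U).trace = (star U * X).trace := trace_mul_comm _ _
    _ = (posSemidefSqrt (posSemidef_conjTranspose_mul_self X)).trace := by
      conv_lhs => rw [hX]
      rw [← Matrix.mul_assoc, Unitary.star_mul_self_of_mem hU, Matrix.one_mul]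
    _ = traceNorm X := (posSemidef_posSemidefSqrt _).ofReal_re_trace.symm

theorem norm_trace_mul_le (X C : Matrix ι ι ℂ) : ‖(X * C).trace‖ ≤ ‖C‖ * traceNorm X := by
  obtain ⟨U, hU, hX⟩ := exists_mem_unitaryGroup_eq_mul_posSemidefSqrt X
  have hP := posSemidef_posSemidefSqrt (posSemidef_conjTranspose_mul_self X)
  set R := posSemidefSqrt hP
  have hRR : R * R = posSemidefSqrt (posSemidef_conjTranspose_mul_self X) :=
    posSemidefSqrt_mul_self hP
  have hRH : Rᴴ = R := (posSemidef_posSemidefSqrt hP).1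
  have htr : (X * C).trace = star (vec R) ⬝ᵥ vec (C * U * R) := by
    rw [star_vec_dotProduct_vec, hRH, hX, ← hRR]
    simp only [Matrix.mul_assoc]
    rw [trace_mul_comm, Matrix.mul_assoc, Matrix.mul_assoc, trace_mul_comm]
    simp only [Matrix.mul_assoc]
  have hnorm : ‖WithLp.toLp 2 (vec R)‖ ^ 2 = traceNorm X := by
    rw [← re_star_dotProduct_self, star_vec_dotProduct_vec, hRH, hRR]
    rfl
  calc ‖(X * C).trace‖
      = ‖inner ℂ (WithLp.toLp 2 (vec R)) (WithLp.toLp 2 (vec (C * U * R)))‖ := by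
        rw [htr, EuclideanSpace.inner_toLp_toLp, dotProduct_comm]
    _ ≤ ‖WithLp.toLp 2 (vec R)‖ * (‖C * U‖ * ‖WithLp.toLp 2 (vec R)‖) := by
        grw [norm_inner_le_norm, norm_toLp_vec_mul_le]
    _ = ‖C‖ * traceNorm X := by
        rw [CStarRing.norm_mul_coe_unitary C ⟨U, hU⟩, ← hnorm]
        ring

theorem re_trace_mul_le_traceNorm {U : Matrix ι ι ℂ} (hU : U ∈ unitaryGroup ι ℂ)
    (X : Matrix ι ι ℂ) : (X * U).trace.re ≤ traceNorm X :=
  calc (X * U).trace.re ≤ ‖U‖ * traceNorm X := (Complex.re_le_norm _).trans (norm_trace_mul_le X U)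
    _ ≤ traceNorm X :=
      mul_le_of_le_one_left (traceNorm_nonneg X) (l2_opNorm_le_one_of_mem_unitaryGroup hU)

theorem traceNorm_add_le (X Y : Matrix ι ι ℂ) :
    traceNorm (X + Y) ≤ traceNorm X + traceNorm Y := by
  obtain ⟨U, hU, h⟩ := exists_mem_unitaryGroup_trace_mul_eq_traceNorm (X + Y)
  rw [← Complex.ofReal_re (traceNorm _), ← h, Matrix.add_mul, trace_add, Complex.add_re]
  exact add_le_add (re_trace_mul_le_traceNorm hU X) (re_trace_mul_le_traceNorm hU Y)

theorem traceNorm_sum_le {α : Type} (s : Finset α) (f : α → Matrix ι ι ℂ) :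
    traceNorm (∑ a ∈ s, f a) ≤ ∑ a ∈ s, traceNorm (f a) :=
  Finset.le_sum_of_subadditive _ traceNorm_zero.le traceNorm_add_le s f

theorem traceNorm_smul (c : ℂ) (X : Matrix ι ι ℂ) : traceNorm (c • X) = ‖c‖ * traceNorm X := by
  have hP := posSemidef_posSemidefSqrt (posSemidef_conjTranspose_mul_self X)
  rw [traceNorm_eq_re_trace_of_mul_self_eq (S := (‖c‖ : ℂ) • posSemidefSqrt _)
    (hP.smul (by positivity)), trace_smul, smul_eq_mul, Complex.re_ofReal_mul, traceNorm]
  rw [smul_mul_smul, posSemidefSqrt_mul_self, conjTranspose_smul, smul_mul_smul, ← sq,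
    Complex.star_def, Complex.conj_mul']

theorem traceNorm_mul_mul_conjTranspose_le {κ : Type} [Fintype κ] [DecidableEq κ]
    (A : Matrix κ ι ℂ) (X : Matrix ι ι ℂ) : traceNorm (A * X * Aᴴ) ≤ ‖A‖ ^ 2 * traceNorm X := by
  obtain ⟨U, hU, h⟩ := exists_mem_unitaryGroup_trace_mul_eq_traceNorm (A * X * Aᴴ)
  have hcyc : (A * X * Aᴴ * U).trace = (X * (Aᴴ * U * A)).trace := by
    rw [show A * X * Aᴴ * U = A * (X * Aᴴ * U) by simp only [Matrix.mul_assoc], trace_mul_comm]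
    simp only [Matrix.mul_assoc]
  have hC : ‖Aᴴ * U * A‖ ≤ ‖A‖ ^ 2 :=
    calc ‖Aᴴ * U * A‖ ≤ ‖Aᴴ‖ * ‖U‖ * ‖A‖ := by grw [l2_opNorm_mul, l2_opNorm_mul]
      _ ≤ ‖A‖ * 1 * ‖A‖ := by
        rw [l2_opNorm_conjTranspose]
        gcongr
        exact l2_opNorm_le_one_of_mem_unitaryGroup hU
      _ = ‖A‖ ^ 2 := by ring
  calc traceNorm (A * X * Aᴴ) = (X * (Aᴴ * U * A)).trace.re := by
        rw [← hcyc, h, Complex.ofReal_re]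
    _ ≤ ‖Aᴴ * U * A‖ * traceNorm X := (Complex.re_le_norm _).trans (norm_trace_mul_le _ _)
    _ ≤ ‖A‖ ^ 2 * traceNorm X := by gcongr; exact traceNorm_nonneg X

end TraceNorm

theorem sub_mul_sub_mul_sub_of_idempotent {R : Type} [Ring R] [Algebra ℂ R] {P Q : R} {s : ℂ}
    (hP : P * P = P) (hQ : Q * Q = Q) (hPQP : P * Q * P = s • P) (hQPQ : Q * P * Q = s • Q) :
    (P - Q) * (P - Q) * (P - Q) = (1 - s) • (P - Q) := by
  calc (P - Q) * (P - Q) * (P - Q)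
      = P * P * P - P * P * Q - P * Q * P + P * (Q * Q) - Q * P * P + Q * P * Q + Q * Q * P
        - Q * Q * Q := by noncomm_ring
    _ = (1 - s) • (P - Q) := by
      rw [hP, hP, hQ, hQ, hPQP, hQPQ, mul_assoc Q P P, hP]
      module

section TraceNormComputations

variable {ι : Type} [Fintype ι] [DecidableEq ι]

/-- If `M ^ 3 = t M`, then `M ^ 2 / √t` is the positive square root of `Mᴴ M = M ^ 2`. -/
theorem traceNorm_eq_of_mul_self_mul_self_eq {M : Matrix ι ι ℂ} (hM : M.IsHermitian) {t : ℝ}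
    (ht : 0 < t) (h : M * M * M = (t : ℂ) • M) : traceNorm M = (M * M).trace.re / √t := by
  have hMM : (M * M).PosSemidef := by
    simpa [hM.eq] using posSemidef_conjTranspose_mul_self M
  have hsqrt : (√t : ℂ) * √t = t := by exact_mod_cast Real.mul_self_sqrt ht.le
  rw [traceNorm_eq_re_trace_of_mul_self_eq (S := ((√t : ℂ))⁻¹ • (M * M))
      (hMM.smul (by positivity)), trace_smul, smul_eq_mul, ← Complex.ofReal_inv,
      Complex.re_ofReal_mul, inv_mul_eq_div]
  rw [smul_mul_smul, ← Matrix.mul_assoc, h, smul_mul_assoc, smul_smul, ← mul_inv, hsqrt, hM.eq,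
    inv_mul_cancel₀ (by exact_mod_cast ht.ne'), one_smul]

end TraceNormComputations

section PureStates

variable {ι : Type} [Fintype ι]

theorem vecMulVec_star_mul_vecMulVec_star (u w : ι → ℂ) :
    vecMulVec u (star u) * vecMulVec w (star w) = (star u ⬝ᵥ w) • vecMulVec u (star w) := by
  rw [vecMulVec_mul_vecMulVec, vecMulVec_smul]

theorem vecMulVec_star_mul_vecMulVec_star_mul_vecMulVec_star (u w : ι → ℂ) :
    vecMulVec u (star u) * vecMulVec w (star w) * vecMulVec u (star u)
      = ((‖star u ⬝ᵥ w‖ ^ 2 : ℝ) : ℂ) • vecMulVec u (star u) := by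
  rw [vecMulVec_star_mul_vecMulVec_star, smul_mul_assoc, vecMulVec_mul_vecMulVec, vecMulVec_smul,
    smul_smul, star_dotProduct w, Complex.star_def, Complex.mul_conj']
  push_cast
  rfl

theorem trace_vecMulVec_star_mul_vecMulVec_star (u w : ι → ℂ) :
    (vecMulVec u (star u) * vecMulVec w (star w)).trace = ((‖star u ⬝ᵥ w‖ ^ 2 : ℝ) : ℂ) := by
  rw [vecMulVec_star_mul_vecMulVec_star, trace_smul, trace_vecMulVec, dotProduct_comm u,
    star_dotProduct w, smul_eq_mul, Complex.star_def, Complex.mul_conj']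
  push_cast
  rfl

theorem traceNorm_vecMulVec_sub_vecMulVec [DecidableEq ι] {u w : ι → ℂ} (hu : star u ⬝ᵥ u = 1)
    (hw : star w ⬝ᵥ w = 1) :
    traceNorm (vecMulVec u (star u) - vecMulVec w (star w)) = 2 * √(1 - ‖star u ⬝ᵥ w‖ ^ 2) := by
  set P := vecMulVec u (star u)
  set Q := vecMulVec w (star w)
  set t := 1 - ‖star u ⬝ᵥ w‖ ^ 2
  have hP : P * P = P := by rw [vecMulVec_star_mul_vecMulVec_star, hu, one_smul]
  have hQ : Q * Q = Q := by rw [vecMulVec_star_mul_vecMulVec_star, hw, one_smul]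
  have hwu : ‖star w ⬝ᵥ u‖ = ‖star u ⬝ᵥ w‖ := by rw [star_dotProduct w, norm_star]
  have hherm : (P - Q).IsHermitian :=
    (posSemidef_vecMulVec_self_star u).1.sub (posSemidef_vecMulVec_self_star w).1
  have htr : ((P - Q) * (P - Q)).trace = ((2 * t : ℝ) : ℂ) := by
    rw [sub_mul, mul_sub, mul_sub, hP, hQ, trace_sub, trace_sub, trace_sub,
      trace_vecMulVec_star_mul_vecMulVec_star, trace_vecMulVec_star_mul_vecMulVec_star, hwu,
      trace_vecMulVec, trace_vecMulVec, dotProduct_comm u, dotProduct_comm w, hu, hw]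
    push_cast [t]
    ring
  have ht : 0 ≤ t := by
    have hpsd : ((P - Q) * (P - Q)).PosSemidef := by
      simpa only [hherm.eq] using posSemidef_conjTranspose_mul_self (P - Q)
    have := (Complex.nonneg_iff.1 hpsd.trace_nonneg).1
    rw [htr, Complex.ofReal_re] at this
    linarith
  rcases ht.eq_or_lt with ht | ht
  · have hPQ : P - Q = 0 := by
      rw [← trace_conjTranspose_mul_self_eq_zero_iff, hherm.eq, htr, ← ht]
      simp
    rw [hPQ, traceNorm_zero, ← ht, Real.sqrt_zero, mul_zero]
  · have hcube : (P - Q) * (P - Q) * (P - Q) = (t : ℂ) • (P - Q) := by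
      have hQPQ := vecMulVec_star_mul_vecMulVec_star_mul_vecMulVec_star w u
      rw [hwu] at hQPQ
      rw [sub_mul_sub_mul_sub_of_idempotent hP hQ
        (vecMulVec_star_mul_vecMulVec_star_mul_vecMulVec_star u w) hQPQ]
      push_cast [t]
      rfl
    rw [traceNorm_eq_of_mul_self_mul_self_eq hherm ht hcube, htr, Complex.ofReal_re,
      mul_div_assoc, Real.div_sqrt]

end PureStates

section PartialTrace

variable {ι κ : Type} [Fintype κ]

def traceLeft (X : Matrix (κ × ι) (κ × ι) ℂ) : Matrix ι ι ℂ :=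
  Matrix.of fun i j => ∑ k, X (k, i) (k, j)

theorem traceLeft_sub (X Y : Matrix (κ × ι) (κ × ι) ℂ) :
    traceLeft (X - Y) = traceLeft X - traceLeft Y := by
  ext i j
  simp [traceLeft]

theorem traceLeft_vecMulVec_vec (A : Matrix ι κ ℂ) :
    traceLeft (vecMulVec (vec A) (star (vec A))) = A * Aᴴ := by
  ext i j
  simp [traceLeft, vecMulVec_apply, mul_apply]

theorem trace_traceLeft_mul [Fintype ι] [DecidableEq κ] (X : Matrix (κ × ι) (κ × ι) ℂ)
    (V : Matrix ι ι ℂ) : (traceLeft X * V).trace = (X * ((1 : Matrix κ κ ℂ) ⊗ₖ V)).trace := by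
  have hdiag : ∀ k i,
      (X * ((1 : Matrix κ κ ℂ) ⊗ₖ V)) (k, i) (k, i) = ∑ j, X (k, i) (k, j) * V j i := by
    intro k i
    rw [mul_apply, Fintype.sum_prod_type, Finset.sum_eq_single k]
    · simp
    · intro k' _ hk
      simp [one_apply_ne hk]
    · simp
  simp only [trace, diag_apply, Fintype.sum_prod_type, hdiag, traceLeft, mul_apply, of_apply,
    Finset.sum_mul]
  conv_rhs => rw [Finset.sum_comm]
  exact Finset.sum_congr rfl fun _ _ => Finset.sum_comm

theorem traceNorm_traceLeft_le [Fintype ι] [DecidableEq ι] [DecidableEq κ]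
    (X : Matrix (κ × ι) (κ × ι) ℂ) : traceNorm (traceLeft X) ≤ traceNorm X := by
  obtain ⟨V, hV, h⟩ := exists_mem_unitaryGroup_trace_mul_eq_traceNorm (traceLeft X)
  rw [← Complex.ofReal_re (traceNorm _), ← h, trace_traceLeft_mul]
  exact re_trace_mul_le_traceNorm (kronecker_mem_unitary (one_mem _) hV) X

end PartialTrace

section FuchsVanDeGraaf

variable {ι : Type} [Fintype ι] [DecidableEq ι]

theorem fidelity_eq_sq_traceNorm {ρ σ : Matrix ι ι ℂ} (hρ : ρ.PosSemidef)
    (hσ : σ.PosSemidef) : fidelity ρ σ = traceNorm (posSemidefSqrt hσ * posSemidefSqrt hρ) ^ 2 := by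
  set A := posSemidefSqrt hρ
  set B := posSemidefSqrt hσ
  have hAH : Aᴴ = A := (posSemidef_posSemidefSqrt hρ).1
  have hBH : Bᴴ = B := (posSemidef_posSemidefSqrt hσ).1
  have hBB : B * B = σ := posSemidefSqrt_mul_self hσ
  have hAσA : (A * σ * A).PosSemidef := by
    simpa only [hAH] using hσ.mul_mul_conjTranspose_same A
  rw [fidelity, show matSqrt ρ = A from dif_pos hρ,
    show matSqrt (A * σ * A) = posSemidefSqrt hAσA from dif_pos hAσA,
    traceNorm_eq_re_trace_of_mul_self_eq (posSemidef_posSemidefSqrt hAσA)]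
  rw [posSemidefSqrt_mul_self, conjTranspose_mul, hAH, hBH, ← hBB]
  simp only [Matrix.mul_assoc]

/-- Fuchs–van de Graaf: purify `ρ` and `σ` as `vec (√ρ W)` and `vec √σ`, whose overlap is
`‖√σ √ρ‖₁ = √F` for a suitable unitary `W` (Uhlmann), then compare the pure states and trace
out the purifying system. -/
theorem traceNorm_sub_le_two_mul_sqrt_one_sub_fidelity {ρ σ : Matrix ι ι ℂ} (hρ : IsState ρ)
    (hσ : IsState σ) : traceNorm (ρ - σ) ≤ 2 * √(1 - fidelity ρ σ) := by
  set A := posSemidefSqrt hρ.1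
  set B := posSemidefSqrt hσ.1
  have hAH : Aᴴ = A := (posSemidef_posSemidefSqrt hρ.1).1
  have hBH : Bᴴ = B := (posSemidef_posSemidefSqrt hσ.1).1
  obtain ⟨W, hW, hBAW⟩ := exists_mem_unitaryGroup_trace_mul_eq_traceNorm (B * A)
  set ψ := vec (A * W)
  set φ := vec B
  have hρψ : traceLeft (vecMulVec ψ (star ψ)) = ρ := by
    rw [traceLeft_vecMulVec_vec, conjTranspose_mul, Matrix.mul_assoc, ← Matrix.mul_assoc W,
      ← star_eq_conjTranspose, Unitary.mul_star_self_of_mem hW, Matrix.one_mul, hAH,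
      posSemidefSqrt_mul_self]
  have hσφ : traceLeft (vecMulVec φ (star φ)) = σ := by
    rw [traceLeft_vecMulVec_vec, hBH, posSemidefSqrt_mul_self]
  have hψ : star ψ ⬝ᵥ ψ = 1 := by
    rw [star_vec_dotProduct_vec, trace_mul_comm, ← traceLeft_vecMulVec_vec, hρψ, hρ.2]
  have hφ : star φ ⬝ᵥ φ = 1 := by
    rw [star_vec_dotProduct_vec, trace_mul_comm, ← traceLeft_vecMulVec_vec, hσφ, hσ.2]
  have hψφ : star ψ ⬝ᵥ φ = traceNorm (B * A) := by
    rw [star_vec_dotProduct_vec, show (A * W)ᴴ * B = (B * A * W)ᴴ by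
      simp only [conjTranspose_mul, hAH, hBH, Matrix.mul_assoc], trace_conjTranspose, hBAW,
      Complex.star_def, Complex.conj_ofReal]
  have hF : ‖star ψ ⬝ᵥ φ‖ ^ 2 = fidelity ρ σ := by
    rw [hψφ, fidelity_eq_sq_traceNorm hρ.1 hσ.1, Complex.norm_real,
      Real.norm_of_nonneg (traceNorm_nonneg _)]
  calc traceNorm (ρ - σ)
      = traceNorm (traceLeft (vecMulVec ψ (star ψ) - vecMulVec φ (star φ))) := by
        rw [traceLeft_sub, hρψ, hσφ]
    _ ≤ traceNorm (vecMulVec ψ (star ψ) - vecMulVec φ (star φ)) := traceNorm_traceLeft_le _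
    _ = 2 * √(1 - fidelity ρ σ) := by rw [traceNorm_vecMulVec_sub_vecMulVec hψ hφ, hF]

end FuchsVanDeGraaf

section Channels

variable {ι₀ ι₁ : Type}

def IsLinearFun.toLinearMap {L : MatMap ι₀ ι₁} (hL : IsLinearFun L) :
    Matrix ι₀ ι₀ ℂ →ₗ[ℂ] Matrix ι₁ ι₁ ℂ where
  toFun := L
  map_add' X Y := by simpa using hL 1 X Y
  map_smul' c X := by
    have h0 : L 0 = 0 := by simpa using hL 1 0 0
    simpa [h0] using hL c X 0

theorem IsLinearFun.map_sum {L : MatMap ι₀ ι₁} (hL : IsLinearFun L) {α : Type} (s : Finset α)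
    (X : α → Matrix ι₀ ι₀ ℂ) : L (∑ a ∈ s, X a) = ∑ a ∈ s, L (X a) :=
  _root_.map_sum hL.toLinearMap X s

theorem IsLinearFun.map_smul {L : MatMap ι₀ ι₁} (hL : IsLinearFun L) (c : ℂ)
    (X : Matrix ι₀ ι₀ ℂ) : L (c • X) = c • L X :=
  _root_.map_smul hL.toLinearMap c X

theorem IsLinearFun.sub {N M : MatMap ι₀ ι₁} (hN : IsLinearFun N) (hM : IsLinearFun M) :
    IsLinearFun fun X => N X - M X := fun c X Y => by
  dsimp only
  rw [hN, hM]
  module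

theorem IsLinearFun.tensorIdT {ρ : Type} {L : MatMap ι₀ ι₁} (hL : IsLinearFun L) :
    IsLinearFun (tensorIdT (ρ := ρ) L) := fun c X Y => by
  ext p q
  have hslice : (Matrix.of fun i j => (c • X + Y) (i, p.2) (j, q.2))
      = c • (Matrix.of fun i j => X (i, p.2) (j, q.2))
        + Matrix.of fun i j => Y (i, p.2) (j, q.2) := by
    ext; simp
  rw [Matrix.add_apply, Matrix.smul_apply]
  change L _ p.1 q.1 = c • L _ p.1 q.1 + L _ p.1 q.1
  rw [hslice, hL]
  rfl

theorem tensorIdT_one_kronecker_mul_mul [Fintype ι₀] [DecidableEq ι₀] [Fintype ι₁] [DecidableEq ι₁]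
    {ρ ρ' : Type} [Fintype ρ] {L : MatMap ι₀ ι₁} (hL : IsLinearFun L)
    (A : Matrix ρ' ρ ℂ) (X : Matrix (ι₀ × ρ) (ι₀ × ρ) ℂ) (B : Matrix ρ ρ' ℂ) :
    tensorIdT L (((1 : Matrix ι₀ ι₀ ℂ) ⊗ₖ A) * X * ((1 : Matrix ι₀ ι₀ ℂ) ⊗ₖ B))
      = ((1 : Matrix ι₁ ι₁ ℂ) ⊗ₖ A) * tensorIdT L X * ((1 : Matrix ι₁ ι₁ ℂ) ⊗ₖ B) := by
  ext ⟨a, s⟩ ⟨b, t⟩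
  have hslice : (Matrix.of fun i j =>
      (((1 : Matrix ι₀ ι₀ ℂ) ⊗ₖ A) * X * ((1 : Matrix ι₀ ι₀ ℂ) ⊗ₖ B)) (i, s) (j, t))
      = ∑ k, ∑ l, (A s k * B l t) • Matrix.of fun i j => X (i, k) (j, l) := by
    ext i j
    simp [Matrix.sum_apply, mul_apply, Fintype.sum_prod_type, one_apply, Finset.sum_mul]
    rw [Finset.sum_comm]
    exact Finset.sum_congr rfl fun _ _ => Finset.sum_congr rfl fun _ _ => by ring
  change L _ a b = _
  rw [hslice]
  simp only [hL.map_sum, hL.map_smul]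
  simp [Matrix.sum_apply, mul_apply, Fintype.sum_prod_type, one_apply, Finset.sum_mul, tensorIdT]
  rw [Finset.sum_comm]
  exact Finset.sum_congr rfl fun _ _ => Finset.sum_congr rfl fun _ _ => by ring

end Channels

theorem IsState.nonempty {ι : Type} [Fintype ι] {ρ : Matrix ι ι ℂ} (hρ : IsState ρ) :
    Nonempty ι := by
  by_contra h
  rw [not_nonempty_iff] at h
  simpa [IsState, trace] using hρ.2

theorem IsState.neZero {d : ℕ} {ρ : Type} [Fintype ρ] {σ : Matrix (Fin d × ρ) (Fin d × ρ) ℂ}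
    (hσ : IsState σ) : NeZero d :=
  NeZero.of_pos (Fin.pos_iff_nonempty.2 ⟨hσ.nonempty.some.1⟩)

theorem maxEntangled_eq_smul_vecMulVec (d : ℕ) :
    maxEntangled d d d
      = (d : ℂ)⁻¹ • vecMulVec (vec (1 : Matrix (Fin d) (Fin d) ℂ)) (star (vec 1)) := by
  ext ⟨i, j⟩ ⟨k, l⟩
  simp [maxEntangled, vecMulVec_apply, one_apply, Fin.val_inj]
  split_ifs <;> simp_all

theorem isState_maxEntangled (d : ℕ) [NeZero d] : IsState (maxEntangled d d d) := by
  rw [maxEntangled_eq_smul_vecMulVec]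
  refine ⟨(posSemidef_vecMulVec_self_star _).smul (by simp), ?_⟩
  rw [trace_smul, trace_vecMulVec, dotProduct_comm, star_vec_dotProduct_vec]
  simp

theorem IsTracePreserving.trace_tensorIdT {ι₀ ι₁ ρ : Type} [Fintype ι₀] [Fintype ι₁] [Fintype ρ]
    {L : MatMap ι₀ ι₁} (hL : IsTracePreserving L) (X : Matrix (ι₀ × ρ) (ι₀ × ρ) ℂ) :
    (tensorIdT L X).trace = X.trace := by
  rw [trace, trace, Fintype.sum_prod_type_right, Fintype.sum_prod_type_right]
  exact Finset.sum_congr rfl fun r _ => hL (Matrix.of fun i j => X (i, r) (j, r))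

theorem IsChannel.isState_choi1 {d : ℕ} [NeZero d] {ι₁ : Type} [Fintype ι₁]
    {N : MatMap (Fin d) ι₁} (hN : IsChannel N) : IsState (choi1 N) :=
  ⟨hN.2.1 d _ (isState_maxEntangled d).1,
    by rw [choi1, hN.2.2.trace_tensorIdT, (isState_maxEntangled d).2]⟩

section ChoiBound

open scoped Matrix.Norms.L2Operator

variable {d : ℕ} {ι₁ ρ : Type} [Fintype ι₁] [DecidableEq ι₁] [Fintype ρ] [DecidableEq ρ]
  {Λ : MatMap (Fin d) ι₁}

theorem traceNorm_tensorIdT_vecMulVec_le [NeZero d] (hΛ : IsLinearFun Λ) (g : Fin d × ρ → ℂ) :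
    traceNorm (tensorIdT Λ (vecMulVec g (star g)))
      ≤ d * (star g ⬝ᵥ g).re * traceNorm (tensorIdT Λ (maxEntangled d d d)) := by
  set G : Matrix ρ (Fin d) ℂ := Matrix.of fun j i => g (i, j)
  set K : Matrix (Fin d × ρ) (Fin d × Fin d) ℂ := (1 : Matrix (Fin d) (Fin d) ℂ) ⊗ₖ G
  have hg : g = K *ᵥ vec 1 := by
    rw [← vec_mul_eq_mulVec, Matrix.mul_one]
    rfl
  have hgg : vecMulVec g (star g) = (d : ℂ) • (K * maxEntangled d d d * Kᴴ) := by
    rw [maxEntangled_eq_smul_vecMulVec, Matrix.mul_smul, Matrix.smul_mul, smul_smul,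
      mul_inv_cancel₀ (NeZero.ne _), one_smul, mul_vecMulVec, vecMulVec_mul, ← star_mulVec, ← hg]
  have hK : Kᴴ = (1 : Matrix (Fin d) (Fin d) ℂ) ⊗ₖ Gᴴ := by
    rw [conjTranspose_kronecker, conjTranspose_one]
  set J := tensorIdT Λ (maxEntangled d d d)
  set K' : Matrix (ι₁ × ρ) (ι₁ × Fin d) ℂ := (1 : Matrix ι₁ ι₁ ℂ) ⊗ₖ G
  have hΛK : tensorIdT Λ (K * maxEntangled d d d * Kᴴ) = K' * J * K'ᴴ := by
    rw [hK, tensorIdT_one_kronecker_mul_mul hΛ, conjTranspose_kronecker, conjTranspose_one]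
  have hK' : ‖K'‖ ≤ ‖WithLp.toLp 2 (vec G)‖ :=
    (l2_opNorm_one_kronecker_le G).trans (l2_opNorm_le_norm_toLp_vec G)
  calc traceNorm (tensorIdT Λ (vecMulVec g (star g))) = d * traceNorm (K' * J * K'ᴴ) := by
        rw [hgg, hΛ.tensorIdT.map_smul, hΛK, traceNorm_smul, Complex.norm_natCast]
    _ ≤ d * (‖K'‖ ^ 2 * traceNorm J) := by
        gcongr
        exact traceNorm_mul_mul_conjTranspose_le K' J
    _ ≤ d * (‖WithLp.toLp 2 (vec G)‖ ^ 2 * traceNorm J) := by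
        have := traceNorm_nonneg J
        gcongr
    _ = d * (star g ⬝ᵥ g).re * traceNorm J := by
        rw [re_star_dotProduct_self, show vec G = g from rfl]
        ring

theorem traceNorm_tensorIdT_le_of_isState (hΛ : IsLinearFun Λ)
    {σ : Matrix (Fin d × ρ) (Fin d × ρ) ℂ} (hσ : IsState σ) :
    traceNorm (tensorIdT Λ σ) ≤ d * traceNorm (tensorIdT Λ (maxEntangled d d d)) := by
  have := hσ.neZero
  obtain ⟨m, v, hv⟩ := posSemidef_iff_eq_sum_vecMulVec.1 hσ.1
  have htr : ∑ i, (star (v i) ⬝ᵥ v i).re = 1 := by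
    have := congrArg Complex.re hσ.2
    rw [hv, trace_sum, Complex.re_sum] at this
    simpa [trace_vecMulVec, dotProduct_comm] using this
  calc traceNorm (tensorIdT Λ σ)
      ≤ ∑ i, traceNorm (tensorIdT Λ (vecMulVec (v i) (star (v i)))) := by
        rw [hv, hΛ.tensorIdT.map_sum]
        exact traceNorm_sum_le _ _
    _ ≤ ∑ i, d * (star (v i) ⬝ᵥ v i).re * traceNorm (tensorIdT Λ (maxEntangled d d d)) :=
        Finset.sum_le_sum fun i _ => traceNorm_tensorIdT_vecMulVec_le hΛ (v i)
    _ = d * traceNorm (tensorIdT Λ (maxEntangled d d d)) := by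
        rw [← Finset.sum_mul, ← Finset.mul_sum, htr, mul_one]

end ChoiBound

section Statements


variable {α₀ β₀ α₁ β₁ α₀' β₀' α₁' β₁' : Type}
variable [Fintype α₀] [DecidableEq α₀] [Fintype β₀] [DecidableEq β₀]
variable [Fintype α₁] [DecidableEq α₁] [Fintype β₁] [DecidableEq β₁]
variable [Fintype α₀'] [DecidableEq α₀'] [Fintype β₀'] [DecidableEq β₀']
variable [Fintype α₁'] [DecidableEq α₁'] [Fintype β₁'] [DecidableEq β₁']

theorem stmt12_general (d d' : ℕ) (N M : MatMap (Fin d) (Fin d'))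
    (hN : IsChannel N) (hM : IsChannel M) (ε : ℝ)
    (hF : 1 - ε ≤ fidelity (choi1 N) (choi1 M)) :
    (1/2) * diamondNorm (fun X => N X - M X) ≤ (d : ℝ) * Real.sqrt ε := by
  suffices h : diamondNorm (fun X => N X - M X) ≤ 2 * (d * √ε) by linarith
  refine Real.sSup_le ?_ (by positivity)
  rintro _ ⟨r, ρ, hρ, hρ1, rfl⟩
  have := IsState.neZero ⟨hρ, hρ1⟩
  calc traceNorm (tensorIdT (fun X => N X - M X) ρ)
      ≤ d * traceNorm (choi1 N - choi1 M) :=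
        traceNorm_tensorIdT_le_of_isState (hN.1.sub hM.1) ⟨hρ, hρ1⟩
    _ ≤ d * (2 * √(1 - fidelity (choi1 N) (choi1 M))) := by
        gcongr
        exact traceNorm_sub_le_two_mul_sqrt_one_sub_fidelity hN.isState_choi1 hM.isState_choi1
    _ ≤ 2 * (d * √ε) := by
        rw [mul_left_comm]
        gcongr
        linarith

theorem stmt12 (d d' : ℕ) (N M : MatMap (Fin d) (Fin d'))
    (hN : IsChannel N) (hM : IsChannel M) (ε : ℝ) (hε : 0 ≤ ε)
    (hF : 1 - ε ≤ fidelity (choi1 N) (choi1 M)) :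
    (1/2) * diamondNorm (fun X => N X - M X) ≤ (d : ℝ) * Real.sqrt ε :=
  stmt12_general d d' N M hN hM ε hF

end Statements

end DynEnt
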